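/- Let H be a complex Hilbert space and S an MI-space in B(H). Then S is commutative (AB = BA for all A, B ∈ S) if and only if the dimension of S over ℂ is 0 or 1. -/

import Mathlib

/-!
Polarization shows that in a subspace `S` of scaled isometries the cross terms are scalar:
`⟪A x, B y⟫ = γ ⟪x, y⟫` for all `A, B ∈ S`. Let `S` be commutative, `A ∈ S` nonzero with
`⟪A x, A y⟫ = a ⟪x, y⟫`, and `B ∈ S`. Then `C := B - (γ / a) • A` has range orthogonal to that of
`A` and commutes with `A`, so `A (C x) = C (A x)` lies in both ranges and is `0`; as `A` is
injective, `C = 0`. Hence `S` is spanned by `A`. Conversely, multiples of one operator commute.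
-/

/-- `A` is a scalar multiple of an isometry. -/
def ScalarMultipleOfIsometry {H : Type*} [NormedAddCommGroup H] [InnerProductSpace ℂ H]
    (A : H →L[ℂ] H) : Prop :=
  ∃ (c : ℂ) (V : H →L[ℂ] H), Isometry V ∧ A = c • V

open scoped InnerProductSpace

section

variable {𝕜 E : Type*} [RCLike 𝕜] [NormedAddCommGroup E] [InnerProductSpace 𝕜 E]

theorem eq_zero_of_commute_of_inner_map_map_eq_zero {A C : E →L[𝕜] E}
    (hA : Function.Injective A) (horth : ∀ x y, ⟪A x, C y⟫_𝕜 = 0) (hcomm : Commute A C) :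
    C = 0 := by
  ext x
  have hACx : A (C x) = 0 := by
    rw [← inner_self_eq_zero (𝕜 := 𝕜)]
    nth_rw 2 [show A (C x) = C (A x) from congr($hcomm.eq x)]
    exact horth (C x) (A x)
  exact hA (by simpa using hACx)

end

theorem Submodule.commute_of_le_span_singleton {K R : Type*} [CommSemiring K] [Semiring R]
    [Algebra K R] {s : Submodule K R} {v : R} (hs : s ≤ K ∙ v) {a b : R} (ha : a ∈ s)
    (hb : b ∈ s) : Commute a b := by
  obtain ⟨α, rfl⟩ := Submodule.mem_span_singleton.mp (hs ha)
  obtain ⟨β, rfl⟩ := Submodule.mem_span_singleton.mp (hs hb)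
  exact ((Commute.refl v).smul_left α).smul_right β

section

variable {H : Type*} [NormedAddCommGroup H] [InnerProductSpace ℂ H]

theorem ScalarMultipleOfIsometry.exists_inner_map_map {T : H →L[ℂ] H}
    (hT : ScalarMultipleOfIsometry T) : ∃ c : ℂ, ∀ x y, ⟪T x, T y⟫_ℂ = c * ⟪x, y⟫_ℂ := by
  obtain ⟨c, V, hV, rfl⟩ := hT
  have hV' : ∀ x y, ⟪V x, V y⟫_ℂ = ⟪x, y⟫_ℂ :=
    (LinearIsometry.mk (V : H →ₗ[ℂ] H)
      ((AddMonoidHomClass.isometry_iff_norm V).mp hV)).inner_map_map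
  refine ⟨starRingEnd ℂ c * c, fun x y => ?_⟩
  simp only [smul_apply, inner_smul_left, inner_smul_right, hV']
  ring

theorem ScalarMultipleOfIsometry.injective {T : H →L[ℂ] H} (hT : ScalarMultipleOfIsometry T)
    (hT0 : T ≠ 0) : Function.Injective T := by
  obtain ⟨c, V, hV, rfl⟩ := hT
  have hc : c ≠ 0 := by rintro rfl; exact hT0 (zero_smul ℂ V)
  exact (smul_right_injective H hc).comp hV.injective

theorem exists_inner_map_map_of_mem (S : Submodule ℂ (H →L[ℂ] H))
    (hS : ∀ T ∈ S, ∃ c : ℂ, ∀ x y, ⟪T x, T y⟫_ℂ = c * ⟪x, y⟫_ℂ)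
    {A B : H →L[ℂ] H} (hA : A ∈ S) (hB : B ∈ S) :
    ∃ γ : ℂ, ∀ x y, ⟪A x, B y⟫_ℂ = γ * ⟪x, y⟫_ℂ := by
  obtain ⟨a, ha⟩ := hS A hA
  obtain ⟨b, hb⟩ := hS B hB
  obtain ⟨p, hp⟩ := hS (A + B) (S.add_mem hA hB)
  obtain ⟨q, hq⟩ := hS (A + Complex.I • B) (S.add_mem hA (S.smul_mem _ hB))
  refine ⟨((p - a - b) - Complex.I * (q - a - b)) / 2, fun x y => ?_⟩
  have hp' := hp x y
  have hq' := hq x y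
  simp only [add_apply, smul_apply, inner_add_left, inner_add_right, inner_smul_left,
    inner_smul_right, Complex.conj_I, ha x y, hb x y] at hp' hq'
  linear_combination (hp' - Complex.I * hq') / 2
    + (⟪A x, B y⟫_ℂ - ⟪B x, A y⟫_ℂ - Complex.I * b * ⟪x, y⟫_ℂ) / 2 * Complex.I_sq

theorem mem_span_singleton_of_commute (S : Submodule ℂ (H →L[ℂ] H))
    (hS : ∀ T ∈ S, ScalarMultipleOfIsometry T) {A B : H →L[ℂ] H} (hA : A ∈ S) (hA0 : A ≠ 0)
    (hB : B ∈ S) (hAB : Commute A B) : B ∈ ℂ ∙ A := by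
  obtain ⟨a, ha⟩ := (hS A hA).exists_inner_map_map
  have ha0 : a ≠ 0 := by
    rintro rfl
    refine hA0 (ContinuousLinearMap.ext fun x => ?_)
    simpa [inner_self_eq_zero] using ha x x
  obtain ⟨γ, hγ⟩ :=
    exists_inner_map_map_of_mem S (fun T hT => (hS T hT).exists_inner_map_map) hA hB
  have horth : ∀ x y, ⟪A x, (B - (γ / a) • A) y⟫_ℂ = 0 := by
    intro x y
    simp only [sub_apply, smul_apply, inner_sub_right, inner_smul_right, hγ x y, ha x y]
    field_simp
    ring
  have hC : B - (γ / a) • A = 0 := eq_zero_of_commute_of_inner_map_map_eq_zero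
    ((hS A hA).injective hA0) horth (hAB.sub_right ((Commute.refl A).smul_right _))
  exact Submodule.mem_span_singleton.mpr ⟨γ / a, (sub_eq_zero.mp hC).symm⟩

theorem forall_commute_iff_exists_le_span_singleton (S : Submodule ℂ (H →L[ℂ] H))
    (hS : ∀ T ∈ S, ScalarMultipleOfIsometry T) :
    (∀ A ∈ S, ∀ B ∈ S, Commute A B) ↔ ∃ V, S ≤ ℂ ∙ V := by
  refine ⟨fun hcomm => ?_,
    fun ⟨V, hV⟩ _ hA _ hB => Submodule.commute_of_le_span_singleton hV hA hB⟩
  by_cases h : ∃ A ∈ S, A ≠ 0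
  · obtain ⟨A, hA, hA0⟩ := h
    exact ⟨A, fun B hB => mem_span_singleton_of_commute S hS hA hA0 hB (hcomm A hA B hB)⟩
  · push Not at h
    exact ⟨0, fun T hT => by simp [h T hT]⟩

end

theorem stmt_19_general {H : Type*} [NormedAddCommGroup H] [InnerProductSpace ℂ H]
    (S : Submodule ℂ (H →L[ℂ] H))
    (hS : ∀ T ∈ S, ScalarMultipleOfIsometry T) :
    (∀ A ∈ S, ∀ B ∈ S, A * B = B * A) ↔
      Module.rank ℂ S = 0 ∨ Module.rank ℂ S = 1 := by
  rw [← Cardinal.le_one_iff, rank_submodule_le_one_iff']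
  exact forall_commute_iff_exists_le_span_singleton S hS

theorem stmt_19 {H : Type*} [NormedAddCommGroup H] [InnerProductSpace ℂ H] [CompleteSpace H]
    (S : Submodule ℂ (H →L[ℂ] H))
    (hS : ∀ T ∈ S, ScalarMultipleOfIsometry T) :
    (∀ A ∈ S, ∀ B ∈ S, A * B = B * A) ↔
      Module.rank ℂ S = 0 ∨ Module.rank ℂ S = 1 :=
  stmt_19_general S hS
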